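/- Let p ≥ 2 be an even integer and X : [0,T] → ℝ a continuous function in V_p(π) admitting continuous local times of order p for X, X⁺ and X⁻ along π. Then L^X_t(0) = L^{X⁺}_t(0) = lim_{n→∞} Σ_{[t_j,t_{j+1}]∈π_n, t_j≤t} 1_{{X(t_j)=0}}(X⁺(t_{j+1}))^{p-1}, and also L^X_t(0) = L^{X⁻}_t(0) = lim_{n→∞} Σ_{[t_j,t_{j+1}]∈π_n, t_j≤t} 1_{{X(t_j)=0}}(X⁻(t_{j+1}))^{p-1}, for every t ∈ [0,T]. -/

import Mathlib

open Filter MeasureTheory Set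

/-- A nested sequence of partitions `0 = t_0^n < t_1^n < ... < t_{N(n)}^n = T` of `[0, T]`. -/
structure PartitionSeq (T : ℝ) where
  N : ℕ → ℕ
  pos : ∀ n, 0 < N n
  pt : ℕ → ℕ → ℝ
  pt_zero : ∀ n, pt n 0 = 0
  pt_last : ∀ n, pt n (N n) = T
  pt_mono : ∀ n, ∀ j, j < N n → pt n j < pt n (j + 1)
  nested : ∀ n, ∀ j, j ≤ N n → ∃ j', j' ≤ N (n + 1) ∧ pt (n + 1) j' = pt n j

/-- Oscillation of `S` along the partition `π_n`. -/
noncomputable def oscP {T : ℝ} (S : ℝ → ℝ) (P : PartitionSeq T) (n : ℕ) : ℝ :=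
  sSup {y | ∃ j < P.N n, ∃ u ∈ Icc (P.pt n j) (P.pt n (j + 1)),
    ∃ v ∈ Icc (P.pt n j) (P.pt n (j + 1)), y = |S u - S v|}

/-- Mesh of the partition `π_n`. -/
noncomputable def meshP {T : ℝ} (P : PartitionSeq T) (n : ℕ) : ℝ :=
  sSup {y | ∃ j < P.N n, y = P.pt n (j + 1) - P.pt n j}

/-- Partial sums `Σ_{t_j ≤ t} |S(t_{j+1}) - S(t_j)|^p` of `p`-th variation along `π_n`. -/
noncomputable def pvarSum {T : ℝ} (S : ℝ → ℝ) (P : PartitionSeq T) (p : ℝ) (n : ℕ) (t : ℝ) : ℝ :=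
  ∑ j ∈ Finset.range (P.N n),
    if P.pt n j ≤ t then |S (P.pt n (j + 1)) - S (P.pt n j)| ^ p else 0

/-- Discrete local time of order `p` of `S` along `π_n`:
`L_t^{π_n;p}(x) = Σ_{t_j ≤ t} 1_{⦇S(t_j),S(t_{j+1})⦈}(x) |S(t_{j+1}) - x|^{p-1}`. -/
noncomputable def discLT {T : ℝ} (S : ℝ → ℝ) (P : PartitionSeq T) (p : ℕ) (n : ℕ)
    (t x : ℝ) : ℝ :=
  ∑ j ∈ Finset.range (P.N n),
    if P.pt n j ≤ t then
      Set.indicator (Set.uIoc (S (P.pt n j)) (S (P.pt n (j + 1))))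
        (fun _ => |S (P.pt n (j + 1)) - x| ^ (p - 1)) x
    else 0

/-- `S` has a continuous local time `L` of order `p` along `P`: the oscillations tend to `0`,
the discrete local times converge uniformly in `x` for each `t ∈ [0,T]`, and the limit is
jointly continuous. -/
def HasCLT {T : ℝ} (P : PartitionSeq T) (p : ℕ) (S : ℝ → ℝ) (L : ℝ → ℝ → ℝ) : Prop :=
  Tendsto (oscP S P) atTop (nhds 0) ∧
  (∀ t ∈ Icc (0 : ℝ) T, TendstoUniformly (fun n x => discLT S P p n t x) (fun x => L t x) atTop) ∧
  Continuous (fun q : ℝ × ℝ => L q.1 q.2)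

/-- `S ∈ V_p(π)` with `p`-th variation function `V`. -/
def HasPVar {T : ℝ} (P : PartitionSeq T) (p : ℝ) (S : ℝ → ℝ) (V : ℝ → ℝ) : Prop :=
  Tendsto (oscP S P) atTop (nhds 0) ∧
  ContinuousOn V (Icc 0 T) ∧ MonotoneOn V (Icc 0 T) ∧
  ∀ t ∈ Icc (0 : ℝ) T, Tendsto (fun n => pvarSum S P p n t) atTop (nhds (V t))

/-!
`X⁺` and `X⁻` are nonnegative and the intervals `⦇a, b⦈ = uIoc a b` are open at their lower
end, so the discrete local times of `X⁺` and `X⁻` vanish at level `0`; hence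
`L^{X⁺}_t(0) = L^{X⁻}_t(0) = 0`. At a level `z > 0`, as soon as every increment of `X` along
`π_n` is smaller than `z`, an interval `⦇X(t_j), X(t_{j+1})⦈` can contain `z` only if both
endpoints are positive, so the discrete local times of `X` and `X⁺` at `z` coincide; thus
`L^X_t = L^{X⁺}_t` on `(0, ∞)` and, by continuity, at `0`.

For the sums over intervals starting at a zero of `X`, with `s = X^±(t_{j+1}) ≥ 0` and `z > 0`,
`s^{p-1} ≤ 2^{p-2} (1_{(0,s]}(z) (s - z)^{p-1} + z^{p-1})`, so the sum is at most
`2^{p-2}` times the discrete local time of `X^±` at level `z` plus `N_n z^{p-1}`. Along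
`z_n = 1/((n+1) N_n) → 0` the first term tends to `L^{X^±}_t(0) = 0` by uniform convergence and
continuity, and the second is at most `N_n z_n = 1/(n+1)`.
-/

namespace PartitionSeq

variable {T : ℝ} (P : PartitionSeq T) (n : ℕ)

lemma pt_le_pt {i k : ℕ} (hik : i ≤ k) (hk : k ≤ P.N n) : P.pt n i ≤ P.pt n k := by
  induction k, hik using Nat.le_induction with
  | base => exact le_rfl
  | succ k _ ih => exact (ih (by omega)).trans (P.pt_mono n k (by omega)).le

lemma pt_mem_Icc {j : ℕ} (hj : j ≤ P.N n) : P.pt n j ∈ Icc (0 : ℝ) T := by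
  refine ⟨?_, ?_⟩
  · simpa only [P.pt_zero] using P.pt_le_pt n (Nat.zero_le j) hj
  · simpa only [P.pt_last] using P.pt_le_pt n hj le_rfl

lemma Icc_pt_subset {j : ℕ} (hj : j < P.N n) :
    Icc (P.pt n j) (P.pt n (j + 1)) ⊆ Icc (0 : ℝ) T :=
  Icc_subset_Icc (P.pt_mem_Icc n hj.le).1 (P.pt_mem_Icc n hj).2

end PartitionSeq

variable {T : ℝ} (P : PartitionSeq T)

lemma abs_sub_le_oscP {X : ℝ → ℝ} (hX : ContinuousOn X (Icc 0 T)) (n : ℕ) {j : ℕ}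
    (hj : j < P.N n) {u v : ℝ} (hu : u ∈ Icc (P.pt n j) (P.pt n (j + 1)))
    (hv : v ∈ Icc (P.pt n j) (P.pt n (j + 1))) :
    |X u - X v| ≤ oscP X P n := by
  obtain ⟨C, hC⟩ := isCompact_Icc.exists_bound_of_continuousOn hX
  refine le_csSup ⟨C + C, ?_⟩ ⟨j, hj, u, hu, v, hv, rfl⟩
  rintro y ⟨k, hk, u', hu', v', hv', rfl⟩
  have hu'C := hC u' (P.Icc_pt_subset n hk hu')
  have hv'C := hC v' (P.Icc_pt_subset n hk hv')
  rw [Real.norm_eq_abs] at hu'C hv'C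
  exact (abs_sub _ _).trans (add_le_add hu'C hv'C)

lemma abs_increment_le_oscP {X : ℝ → ℝ} (hX : ContinuousOn X (Icc 0 T)) (n : ℕ) {j : ℕ}
    (hj : j < P.N n) : |X (P.pt n (j + 1)) - X (P.pt n j)| ≤ oscP X P n :=
  have hjj := (P.pt_mono n j hj).le
  abs_sub_le_oscP P hX n hj ⟨hjj, le_rfl⟩ ⟨le_rfl, hjj⟩

lemma discLT_eq_zero_of_le {S : ℝ → ℝ} {x : ℝ} (hS : ∀ y, x ≤ S y) (p n : ℕ) (t : ℝ) :
    discLT S P p n t x = 0 := by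
  refine Finset.sum_eq_zero fun j _ => ?_
  have hx : x ∉ uIoc (S (P.pt n j)) (S (P.pt n (j + 1))) := fun hx =>
    (le_min (hS _) (hS _)).not_gt hx.1
  simp [indicator_of_notMem hx]

lemma HasCLT.apply_eq_zero_of_le {p : ℕ} {S : ℝ → ℝ} {L : ℝ → ℝ → ℝ} (hL : HasCLT P p S L)
    {t x : ℝ} (ht : t ∈ Icc (0 : ℝ) T) (hS : ∀ y, x ≤ S y) : L t x = 0 :=
  tendsto_nhds_unique ((hL.2.1 t ht).tendsto_at x)
    (tendsto_const_nhds.congr fun n => (discLT_eq_zero_of_le P hS p n t).symm)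

lemma pos_of_mem_uIoc_of_abs_sub_lt {a b z : ℝ} (hab : |b - a| < z) (hz : z ∈ uIoc a b) :
    0 < a ∧ 0 < b := by
  obtain ⟨-, hzmax⟩ := hz
  rw [abs_lt] at hab
  rcases le_total a b with h | h
  · rw [max_eq_right h] at hzmax
    constructor <;> linarith
  · rw [max_eq_left h] at hzmax
    constructor <;> linarith

lemma indicator_uIoc_posPart_eq {k : ℕ} {a b z : ℝ} (hab : |b - a| < z) :
    indicator (uIoc a b) (fun _ => |b - z| ^ k) z
      = indicator (uIoc (max a 0) (max b 0)) (fun _ => |max b 0 - z| ^ k) z := by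
  by_cases hpos : 0 < a ∧ 0 < b
  · rw [max_eq_left hpos.1.le, max_eq_left hpos.2.le]
  have hab' : |max b 0 - max a 0| < z := (abs_max_sub_max_le_abs b a 0).trans_lt hab
  rw [indicator_of_notMem fun h => hpos (pos_of_mem_uIoc_of_abs_sub_lt hab h),
    indicator_of_notMem fun h => hpos ?_]
  obtain ⟨ha, hb⟩ := pos_of_mem_uIoc_of_abs_sub_lt hab' h
  exact ⟨by simpa using ha, by simpa using hb⟩

lemma discLT_eq_discLT_posPart {X : ℝ → ℝ} (p n : ℕ) (t : ℝ) {z : ℝ}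
    (hX : ∀ j < P.N n, |X (P.pt n (j + 1)) - X (P.pt n j)| < z) :
    discLT X P p n t z = discLT (fun s => max (X s) 0) P p n t z :=
  Finset.sum_congr rfl fun j hj => by
    rw [indicator_uIoc_posPart_eq (hX j (Finset.mem_range.mp hj))]

lemma HasCLT.apply_eq_apply_posPart {p : ℕ} {X : ℝ → ℝ} (hXc : ContinuousOn X (Icc 0 T))
    {L Lp : ℝ → ℝ → ℝ} (hL : HasCLT P p X L) (hLp : HasCLT P p (fun s => max (X s) 0) Lp)
    {t : ℝ} (ht : t ∈ Icc (0 : ℝ) T) {z : ℝ} (hz : 0 < z) : L t z = Lp t z := by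
  have hsmall : ∀ᶠ n in atTop, ∀ j < P.N n, |X (P.pt n (j + 1)) - X (P.pt n j)| < z := by
    filter_upwards [hL.1.eventually (gt_mem_nhds hz)] with n hn j hj
    exact (abs_increment_le_oscP P hXc n hj).trans_lt hn
  refine tendsto_nhds_unique ((hL.2.1 t ht).tendsto_at z) ((hLp.2.1 t ht).tendsto_at z |>.congr' ?_)
  filter_upwards [hsmall] with n hn
  exact (discLT_eq_discLT_posPart P p n t hn).symm

lemma HasCLT.apply_zero_eq_apply_zero_posPart {p : ℕ} {X : ℝ → ℝ}
    (hXc : ContinuousOn X (Icc 0 T)) {L Lp : ℝ → ℝ → ℝ} (hL : HasCLT P p X L)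
    (hLp : HasCLT P p (fun s => max (X s) 0) Lp) {t : ℝ} (ht : t ∈ Icc (0 : ℝ) T) :
    L t 0 = Lp t 0 := by
  have hEq : EqOn (L t) (Lp t) (Ioi 0) := fun _ hz => hL.apply_eq_apply_posPart P hXc hLp ht hz
  refine hEq.closure (hL.2.2.uncurry_left t) (hLp.2.2.uncurry_left t) ?_
  rw [closure_Ioi]
  exact mem_Ici.2 le_rfl

lemma pow_le_indicator_uIoc_add_pow {s z : ℝ} (hs : 0 ≤ s) (hz : 0 < z) (k : ℕ) :
    s ^ k ≤ 2 ^ (k - 1) * (indicator (uIoc 0 s) (fun _ => |s - z| ^ k) z + z ^ k) := by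
  rcases le_or_gt s z with hsz | hzs
  · have hind : 0 ≤ indicator (uIoc 0 s) (fun _ => |s - z| ^ k) z :=
      indicator_nonneg (fun _ _ => by positivity) z
    calc s ^ k ≤ z ^ k := pow_le_pow_left₀ hs hsz k
      _ ≤ indicator (uIoc 0 s) (fun _ => |s - z| ^ k) z + z ^ k := le_add_of_nonneg_left hind
      _ ≤ _ := le_mul_of_one_le_left (by positivity) (one_le_pow₀ one_le_two)
  · have hmem : z ∈ uIoc 0 s := by
      rw [uIoc_of_le hs]
      exact ⟨hz, hzs.le⟩
    rw [indicator_of_mem hmem, abs_of_pos (sub_pos.2 hzs)]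
    calc s ^ k = (s - z + z) ^ k := by ring
      _ ≤ _ := add_pow_le (sub_nonneg.2 hzs.le) hz.le k

lemma sum_pow_of_zero_start_le {X S : ℝ → ℝ} (hS : ∀ y, 0 ≤ S y)
    (hS0 : ∀ y, X y = 0 → S y = 0) (p n : ℕ) (t : ℝ) {z : ℝ} (hz : 0 < z) :
    (∑ j ∈ Finset.range (P.N n),
        if P.pt n j ≤ t ∧ X (P.pt n j) = 0 then S (P.pt n (j + 1)) ^ (p - 1) else 0)
      ≤ 2 ^ (p - 1 - 1) * (discLT S P p n t z + P.N n * z ^ (p - 1)) := by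
  calc _ ≤ ∑ j ∈ Finset.range (P.N n), 2 ^ (p - 1 - 1) * ((if P.pt n j ≤ t then
          indicator (uIoc (S (P.pt n j)) (S (P.pt n (j + 1))))
            (fun _ => |S (P.pt n (j + 1)) - z| ^ (p - 1)) z else 0) + z ^ (p - 1)) :=
        Finset.sum_le_sum fun j _ => ?_
    _ = _ := by
        simp only [discLT, mul_add, Finset.mul_sum, Finset.sum_add_distrib, Finset.sum_const,
          Finset.card_range, nsmul_eq_mul]
        ring
  by_cases hj : P.pt n j ≤ t ∧ X (P.pt n j) = 0
  · rw [if_pos hj, if_pos hj.1, hS0 _ hj.2]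
    exact pow_le_indicator_uIoc_add_pow (hS _) hz _
  · rw [if_neg hj]
    refine mul_nonneg (by positivity) (add_nonneg ?_ (by positivity))
    split_ifs
    exacts [indicator_nonneg (fun _ _ => by positivity) z, le_rfl]

lemma tendsto_sum_pow_of_zero_start {p : ℕ} (hp : 2 ≤ p) {X S : ℝ → ℝ} (hS : ∀ y, 0 ≤ S y)
    (hS0 : ∀ y, X y = 0 → S y = 0) {L : ℝ → ℝ → ℝ} (hL : HasCLT P p S L) {t : ℝ}
    (ht : t ∈ Icc (0 : ℝ) T) :
    Tendsto (fun n => ∑ j ∈ Finset.range (P.N n),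
        if P.pt n j ≤ t ∧ X (P.pt n j) = 0 then S (P.pt n (j + 1)) ^ (p - 1) else 0)
      atTop (nhds 0) := by
  set z : ℕ → ℝ := fun n => 1 / ((n + 1) * P.N n)
  have hN : ∀ n, (1 : ℝ) ≤ P.N n := fun n => Nat.one_le_cast.2 (P.pos n)
  have hz_pos : ∀ n, 0 < z n := fun n => by have := hN n; positivity
  have hz_le : ∀ n, z n ≤ 1 / (n + 1) := fun n =>
    one_div_le_one_div_of_le (by positivity) (le_mul_of_one_le_right (by positivity) (hN n))
  have hN_mul_z : ∀ n, P.N n * z n = 1 / (n + 1) := fun n => by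
    have := hN n
    simp only [z]
    field_simp
  have hz : Tendsto z atTop (nhds 0) :=
    squeeze_zero (fun n => (hz_pos n).le) hz_le tendsto_one_div_add_atTop_nhds_zero_nat
  have hdisc : Tendsto (fun n => discLT S P p n t (z n)) atTop (nhds 0) := by
    simpa only [hL.apply_eq_zero_of_le P ht hS] using
      (hL.2.1 t ht).tendsto_comp (hL.2.2.uncurry_left t).continuousAt hz
  have hbound : ∀ n, discLT S P p n t (z n) + P.N n * z n ^ (p - 1)
      ≤ discLT S P p n t (z n) + 1 / (n + 1) := fun n => by
    rw [← hN_mul_z]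
    gcongr
    · exact pow_le_of_le_one (hz_pos n).le ((hz_le n).trans
        (div_le_one_of_le₀ (by linarith) (by positivity))) (by omega)
  refine squeeze_zero (fun n => Finset.sum_nonneg fun j _ => ?_)
    (fun n => (sum_pow_of_zero_start_le P hS hS0 p n t (hz_pos n)).trans
      (mul_le_mul_of_nonneg_left (hbound n) (by positivity))) ?_
  · split_ifs
    exacts [pow_nonneg (hS _) _, le_rfl]
  · simpa using (hdisc.add tendsto_one_div_add_atTop_nhds_zero_nat).const_mul (2 ^ (p - 1 - 1))

theorem local_time_pos_neg_parts_general {T : ℝ} (P : PartitionSeq T)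
    (p : ℕ) (hp2 : 2 ≤ p)
    (X : ℝ → ℝ) (hXc : ContinuousOn X (Icc 0 T))
    (L Lp Lm : ℝ → ℝ → ℝ) (hL : HasCLT P p X L)
    (hLp : HasCLT P p (fun t => max (X t) 0) Lp)
    (hLm : HasCLT P p (fun t => max (-X t) 0) Lm) :
    ∀ t ∈ Icc (0 : ℝ) T,
      L t 0 = Lp t 0 ∧
      Tendsto (fun n => ∑ j ∈ Finset.range (P.N n),
          if P.pt n j ≤ t ∧ X (P.pt n j) = 0 then (max (X (P.pt n (j + 1))) 0) ^ (p - 1) else 0)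
        atTop (nhds (L t 0)) ∧
      L t 0 = Lm t 0 ∧
      Tendsto (fun n => ∑ j ∈ Finset.range (P.N n),
          if P.pt n j ≤ t ∧ X (P.pt n j) = 0 then (max (-X (P.pt n (j + 1))) 0) ^ (p - 1) else 0)
        atTop (nhds (L t 0)) := by
  intro t ht
  have hL_eq : L t 0 = Lp t 0 := hL.apply_zero_eq_apply_zero_posPart P hXc hLp ht
  have hLp0 : Lp t 0 = 0 := hLp.apply_eq_zero_of_le P ht fun _ => le_max_right _ _
  have hLm0 : Lm t 0 = 0 := hLm.apply_eq_zero_of_le P ht fun _ => le_max_right _ _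
  refine ⟨hL_eq, ?_, by rw [hL_eq, hLp0, hLm0], ?_⟩ <;> rw [hL_eq, hLp0]
  · exact tendsto_sum_pow_of_zero_start P hp2 (fun _ => le_max_right _ _)
      (fun y hy => by simp [hy]) hLp ht
  · exact tendsto_sum_pow_of_zero_start P hp2 (fun _ => le_max_right _ _)
      (fun y hy => by simp [hy]) hLm ht

/-- Lemmas 3 and 4: for continuous `X ∈ V_p(π)` with continuous local times of order `p`
for `X`, `X⁺` and `X⁻` along `π`,
`L^X_t(0) = L^{X⁺}_t(0) = lim_n Σ_{t_j≤t} 1_{X(t_j)=0}(X⁺(t_{j+1}))^{p-1}` and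
`L^X_t(0) = L^{X⁻}_t(0) = lim_n Σ_{t_j≤t} 1_{X(t_j)=0}(X⁻(t_{j+1}))^{p-1}`. -/
theorem local_time_pos_neg_parts {T : ℝ} (hT : 0 < T) (P : PartitionSeq T)
    (p : ℕ) (hp : Even p) (hp2 : 2 ≤ p)
    (X : ℝ → ℝ) (hXc : ContinuousOn X (Icc 0 T))
    (V : ℝ → ℝ) (hV : HasPVar P (p : ℝ) X V)
    (L Lp Lm : ℝ → ℝ → ℝ) (hL : HasCLT P p X L)
    (hLp : HasCLT P p (fun t => max (X t) 0) Lp)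
    (hLm : HasCLT P p (fun t => max (-X t) 0) Lm) :
    ∀ t ∈ Icc (0 : ℝ) T,
      L t 0 = Lp t 0 ∧
      Tendsto (fun n => ∑ j ∈ Finset.range (P.N n),
          if P.pt n j ≤ t ∧ X (P.pt n j) = 0 then (max (X (P.pt n (j + 1))) 0) ^ (p - 1) else 0)
        atTop (nhds (L t 0)) ∧
      L t 0 = Lm t 0 ∧
      Tendsto (fun n => ∑ j ∈ Finset.range (P.N n),
          if P.pt n j ≤ t ∧ X (P.pt n j) = 0 then (max (-X (P.pt n (j + 1))) 0) ^ (p - 1) else 0)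
        atTop (nhds (L t 0)) :=
  local_time_pos_neg_parts_general P p hp2 X hXc L Lp Lm hL hLp hLm
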